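/- arXiv:1412.7366 — 3 statements merged into one kernel-verified Lean document; each statement's English description precedes it below -/
import Mathlib

section
/- For every natural number k ≥ 1, with n = 3^(k+2) - 1, one has ((2k+8)·3^k - 1) / (3^(k+2) - 1) ≥ (2/9)·log₃(n+1), where the quotient and logarithm are taken over the reals. -/
/-! With `x = 3 ^ k` we have `n + 1 = 9 x` and `log₃ (n + 1) = k + 2`, so after clearing the
denominator the claim reduces to `1 - 2 (k + 2) / 9 ≤ 4 x`, which holds since `x ≥ 1`. -/

lemma two_ninths_mul_le_div {m x : ℝ} (hm : 0 ≤ m) (hx : 1 ≤ x) :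
    2 / 9 * (m + 2) ≤ ((2 * m + 8) * x - 1) / (9 * x - 1) := by
  rw [le_div_iff₀ (by linarith)]
  linarith

lemma logb_natCast_pow_sub_one_add_one {b : ℕ} (hb : 1 < b) (m : ℕ) :
    Real.logb b (((b ^ m - 1 : ℕ) : ℝ) + 1) = m := by
  have hb' : (1 : ℝ) < b := by exact_mod_cast hb
  rw [Nat.cast_sub (Nat.one_le_pow _ _ (by omega)), Nat.cast_one, sub_add_cancel, Nat.cast_pow,
    Real.logb_pow, Real.logb_self_eq_one hb', mul_one]

theorem greedy_ratio_log_bound_general (k : ℕ) (n : ℕ) (hn : n = 3 ^ (k + 2) - 1) :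
    (((2 * k + 8) * 3 ^ k - 1 : ℝ)) / ((3 : ℝ) ^ (k + 2) - 1)
      ≥ (2 / 9) * Real.logb 3 (n + 1) := by
  have hlog : Real.logb 3 ((n : ℝ) + 1) = k + 2 := by
    subst hn
    exact_mod_cast logb_natCast_pow_sub_one_add_one (b := 3) (by norm_num) (k + 2)
  have hpow : (3 : ℝ) ^ (k + 2) = 9 * 3 ^ k := by ring
  rw [hlog, hpow]
  exact two_ninths_mul_le_div k.cast_nonneg (one_le_pow₀ (by norm_num : (1 : ℝ) ≤ 3))

theorem greedy_ratio_log_bound (k : ℕ) (hk : 1 ≤ k) (n : ℕ) (hn : n = 3 ^ (k + 2) - 1) :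
    (((2 * k + 8) * 3 ^ k - 1 : ℝ)) / ((3 : ℝ) ^ (k + 2) - 1)
      ≥ (2 / 9) * Real.logb 3 (n + 1) :=
  greedy_ratio_log_bound_general k n hn
end

section
/- The function f(k) = ((2k+8)·3^k - 1)/(3^(k+2) - 1), viewed as a real-valued function of the natural number k, is unbounded; i.e., for every real C there exists k with f(k) > C. -/
/-! The numerator is about `(2k + 8) 3^k` and the denominator about `9 · 3^k`, so the ratio is
at least the linear function `(2k + 7) / 9`, which is unbounded. -/

lemma linear_le_greedy_ratio (k : ℕ) :
    ((2 * k + 7 : ℝ)) / 9 ≤ ((2 * k + 8) * 3 ^ k - 1 : ℝ) / ((3 : ℝ) ^ (k + 2) - 1) := by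
  have h_one_le : (1 : ℝ) ≤ 3 ^ k := one_le_pow₀ (by norm_num)
  have h_pow : (3 : ℝ) ^ (k + 2) = 9 * 3 ^ k := by ring
  have h_den : (0 : ℝ) < 3 ^ (k + 2) - 1 := by rw [h_pow]; linarith
  rw [div_le_div_iff₀ (by norm_num) h_den, h_pow]
  nlinarith

theorem greedy_ratio_unbounded :
    ∀ C : ℝ, ∃ k : ℕ,
      (((2 * k + 8) * 3 ^ k - 1 : ℝ)) / ((3 : ℝ) ^ (k + 2) - 1) > C := by
  intro C
  obtain ⟨k, hk⟩ := exists_nat_gt (9 * C)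
  refine ⟨k, lt_of_lt_of_le ?_ (linear_le_greedy_ratio k)⟩
  rw [lt_div_iff₀ (by norm_num)]
  linarith
end

section
/- For every natural number k ≥ 1, ((2k+8)·3^k - 1 + 3^(k+2)) / (2·3^(k+2) - 1) ≥ (2k+17)/18, as real numbers. -/
/-! With `t = 3^k` the ratio is `((2k+17)t - 1) / (18t - 1)`, and subtracting `1` from the
numerator and denominator of `a t / (b t)` does not decrease it exactly when `b ≤ a`. -/

theorem div_le_mul_sub_one_div_mul_sub_one {a b t : ℝ} (hb : 0 < b) (hbt : 1 < b * t)
    (hba : b ≤ a) : a / b ≤ (a * t - 1) / (b * t - 1) := by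
  rw [div_le_div_iff₀ hb (by linarith)]
  linarith

theorem clarke_wright_ratio_bound (k : ℕ) (hk : 1 ≤ k) :
    (((2 * k + 8) * 3 ^ k - 1 + 3 ^ (k + 2) : ℝ)) / (2 * (3 : ℝ) ^ (k + 2) - 1)
      ≥ (2 * k + 17) / 18 := by
  have hnum : ((2 * k + 8) * 3 ^ k - 1 + 3 ^ (k + 2) : ℝ) = (2 * k + 17) * 3 ^ k - 1 := by ring
  have hden : 2 * (3 : ℝ) ^ (k + 2) - 1 = 18 * 3 ^ k - 1 := by ring
  rw [hnum, hden, ge_iff_le]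
  have h3k : (1 : ℝ) ≤ 3 ^ k := one_le_pow₀ (by norm_num)
  have hk' : (1 : ℝ) ≤ k := by exact_mod_cast hk
  exact div_le_mul_sub_one_div_mul_sub_one (by norm_num) (by linarith) (by linarith)
end
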